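/- Let X1, X2, X3 be tuples of random variables on a finite probability space with X3 a sub-tuple of the combined tuple (X1, X2), and let W be a random variable with H(W | Xi) = 0 for i = 1,2,3. Then the triple mutual information satisfies I(X1; X2; X3) ≥ H(W). -/

import Mathlib

/-! With `A = g1 ∘ X1` and `B = g2 ∘ X2`, the sub-tuple relation collapses the triple information
to `I(X1;X2;X3) = H(A,B) - H(B|X1) - H(A|X2)`. As `W` is a function of `X1`, conditioning on `X1`
is conditioning on `(X1,W)`, which determines `(A,W)`; hence `H(B|X1) ≤ H(B|A,W)`, and likewise
`H(A|X2) ≤ H(A|W)`. By the chain rule these bounds add up to `H(A,B|W)`, which is `H(A,B) - H(W)`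
because `W` is also a function of `(A,B)`. The only analytic input is submodularity of entropy,
a consequence of `log x ≤ x - 1`. -/

open Finset

/-- Probability mass of the event `X = a` under weights `p`. -/
noncomputable def pmass {Ω α : Type} [Fintype Ω] [DecidableEq α]
    (p : Ω → ℝ) (X : Ω → α) (a : α) : ℝ :=
  ∑ ω, if X ω = a then p ω else 0

/-- Shannon entropy (base 2) of a random variable `X` on a finite space. -/
noncomputable def ent {Ω α : Type} [Fintype Ω] [Fintype α] [DecidableEq α]
    (p : Ω → ℝ) (X : Ω → α) : ℝ :=
  ∑ a, -(pmass p X a * Real.logb 2 (pmass p X a))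

/-- Conditional Shannon entropy `H(X|Y) = H(X,Y) - H(Y)`. -/
noncomputable def condEnt {Ω α β : Type} [Fintype Ω] [Fintype α] [Fintype β]
    [DecidableEq α] [DecidableEq β] (p : Ω → ℝ) (X : Ω → α) (Y : Ω → β) : ℝ :=
  ent p (fun ω => (X ω, Y ω)) - ent p Y

/-- Conditional mutual information `I(X;Y|W) = H(X|W) + H(Y|W) - H(X,Y|W)`. -/
noncomputable def condMI {Ω α β γ : Type} [Fintype Ω] [Fintype α] [Fintype β] [Fintype γ]
    [DecidableEq α] [DecidableEq β] [DecidableEq γ]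
    (p : Ω → ℝ) (X : Ω → α) (Y : Ω → β) (W : Ω → γ) : ℝ :=
  condEnt p X W + condEnt p Y W - condEnt p (fun ω => (X ω, Y ω)) W

/-- Triple (interaction) mutual information. -/
noncomputable def tripleMI {Ω α β γ : Type} [Fintype Ω] [Fintype α] [Fintype β] [Fintype γ]
    [DecidableEq α] [DecidableEq β] [DecidableEq γ]
    (p : Ω → ℝ) (X : Ω → α) (Y : Ω → β) (Z : Ω → γ) : ℝ :=
  ent p X + ent p Y + ent p Z
    - ent p (fun ω => (X ω, Y ω)) - ent p (fun ω => (X ω, Z ω)) - ent p (fun ω => (Y ω, Z ω))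
    + ent p (fun ω => (X ω, Y ω, Z ω))

section Mass

variable {Ω α β : Type} [Fintype Ω] [DecidableEq α] {p : Ω → ℝ}

lemma pmass_nonneg (hp : ∀ ω, 0 ≤ p ω) (X : Ω → α) (a : α) : 0 ≤ pmass p X a :=
  sum_nonneg fun ω _ => by split_ifs <;> simp [hp ω]

lemma le_pmass_apply (hp : ∀ ω, 0 ≤ p ω) (X : Ω → α) (ω : Ω) : p ω ≤ pmass p X (X ω) := by
  simpa [pmass] using single_le_sum (f := fun ω' => if X ω' = X ω then p ω' else 0)
    (fun ω' _ => by split_ifs <;> simp [hp ω']) (mem_univ ω)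

lemma pmass_le_pmass_comp [DecidableEq β] (hp : ∀ ω, 0 ≤ p ω) (X : Ω → α) (f : α → β)
    (a : α) : pmass p X a ≤ pmass p (fun ω => f (X ω)) (f a) :=
  sum_le_sum fun ω _ => by
    by_cases h : X ω = a
    · simp [h]
    · simp only [h, if_false]
      split_ifs <;> simp [hp ω]

lemma sum_pmass_mul [Fintype α] (p : Ω → ℝ) (X : Ω → α) (g : α → ℝ) :
    ∑ a, pmass p X a * g a = ∑ ω, p ω * g (X ω) := by
  simp_rw [pmass, sum_mul, ite_mul, zero_mul]
  rw [sum_comm]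
  simp

lemma sum_pmass [Fintype α] (p : Ω → ℝ) (X : Ω → α) : ∑ a, pmass p X a = ∑ ω, p ω := by
  simpa using sum_pmass_mul p X 1

lemma sum_pmass_pair_fst [Fintype α] [DecidableEq β] (p : Ω → ℝ) (X : Ω → α) (Z : Ω → β)
    (z : β) : ∑ x, pmass p (fun ω => (X ω, Z ω)) (x, z) = pmass p Z z := by
  simp_rw [pmass, Prod.mk.injEq, ite_and]
  rw [sum_comm]
  simp

lemma sum_mul_log_nonpos {f : Ω → ℝ} (hp : ∀ ω, 0 ≤ p ω) (hf : ∀ ω, 0 < p ω → 0 < f ω)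
    (h : ∑ ω, p ω * f ω ≤ ∑ ω, p ω) : ∑ ω, p ω * Real.log (f ω) ≤ 0 := by
  have hpt : ∀ ω, p ω * Real.log (f ω) ≤ p ω * (f ω - 1) := fun ω => by
    rcases (hp ω).eq_or_lt with h0 | h0
    · simp [← h0]
    · exact mul_le_mul_of_nonneg_left (Real.log_le_sub_one_of_pos (hf ω h0)) h0.le
  calc ∑ ω, p ω * Real.log (f ω) ≤ ∑ ω, p ω * (f ω - 1) := sum_le_sum fun ω _ => hpt ω
    _ = ∑ ω, p ω * f ω - ∑ ω, p ω := by simp only [mul_sub, mul_one, sum_sub_distrib]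
    _ ≤ 0 := sub_nonpos.mpr h

end Mass

section Entropy

variable {Ω α β γ : Type} [Fintype Ω] [Fintype α] [Fintype β] [Fintype γ]
  [DecidableEq α] [DecidableEq β] [DecidableEq γ] {p : Ω → ℝ}

lemma ent_eq_neg_sum (p : Ω → ℝ) (X : Ω → α) :
    ent p X = -∑ ω, p ω * Real.logb 2 (pmass p X (X ω)) := by
  rw [ent, ← sum_pmass_mul p X fun a => Real.logb 2 (pmass p X a), ← sum_neg_distrib]

lemma ent_comp_le (hp : ∀ ω, 0 ≤ p ω) (X : Ω → α) (f : α → β) :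
    ent p (fun ω => f (X ω)) ≤ ent p X := by
  rw [ent_eq_neg_sum, ent_eq_neg_sum, neg_le_neg_iff]
  refine sum_le_sum fun ω _ => ?_
  rcases (hp ω).eq_or_lt with h0 | h0
  · simp [← h0]
  · exact mul_le_mul_of_nonneg_left (Real.logb_le_logb_of_le one_lt_two
      (h0.trans_le (le_pmass_apply hp X ω)) (pmass_le_pmass_comp hp X f (X ω))) h0.le

lemma ent_eq_of_comp_of_comp (hp : ∀ ω, 0 ≤ p ω) {X : Ω → α} {Y : Ω → β} (f : α → β)
    (g : β → α) (hf : ∀ ω, Y ω = f (X ω)) (hg : ∀ ω, X ω = g (Y ω)) : ent p Y = ent p X := by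
  obtain rfl : Y = fun ω => f (X ω) := funext hf
  refine le_antisymm (ent_comp_le hp X f) ?_
  conv_lhs => rw [show X = fun ω => g (f (X ω)) from funext hg]
  exact ent_comp_le hp _ g

lemma sum_mul_pmass_ratio_le (hp : ∀ ω, 0 ≤ p ω) (X : Ω → α) (Y : Ω → β) (Z : Ω → γ) :
    ∑ ω, p ω * (pmass p (fun ω => (X ω, Z ω)) (X ω, Z ω) *
      pmass p (fun ω => (Y ω, Z ω)) (Y ω, Z ω) /
      (pmass p (fun ω => (X ω, Y ω, Z ω)) (X ω, Y ω, Z ω) * pmass p Z (Z ω))) ≤ ∑ ω, p ω := by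
  set mXZ := pmass p (fun ω => (X ω, Z ω))
  set mYZ := pmass p (fun ω => (Y ω, Z ω))
  set mXYZ := pmass p (fun ω => (X ω, Y ω, Z ω))
  set mZ := pmass p Z
  rw [← sum_pmass_mul p (fun ω => (X ω, Y ω, Z ω))
    fun t => mXZ (t.1, t.2.2) * mYZ (t.2.1, t.2.2) / (mXYZ t * mZ t.2.2)]
  calc ∑ t, mXYZ t * (mXZ (t.1, t.2.2) * mYZ (t.2.1, t.2.2) / (mXYZ t * mZ t.2.2))
      ≤ ∑ t : α × β × γ, mXZ (t.1, t.2.2) * mYZ (t.2.1, t.2.2) / mZ t.2.2 := by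
        refine sum_le_sum fun t _ => ?_
        obtain h0 | h0 : mXYZ t = 0 ∨ 0 < mXYZ t := (pmass_nonneg hp _ t).eq_or_lt'
        · rw [h0, zero_mul]
          exact div_nonneg (mul_nonneg (pmass_nonneg hp _ _) (pmass_nonneg hp _ _))
            (pmass_nonneg hp _ _)
        · rw [← mul_div_assoc, mul_div_mul_left _ _ h0.ne']
    _ = ∑ z, (∑ x, mXZ (x, z)) * (∑ y, mYZ (y, z)) / mZ z := by
        simp_rw [Fintype.sum_prod_type, sum_mul_sum, sum_div]
        exact (sum_congr rfl fun x _ => sum_comm).trans sum_comm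
    _ = ∑ z, mZ z := by simp only [mXZ, mYZ, mZ, sum_pmass_pair_fst, mul_self_div_self]
    _ = ∑ ω, p ω := sum_pmass p Z

theorem ent_triple_add_ent_le (hp : ∀ ω, 0 ≤ p ω) (X : Ω → α) (Y : Ω → β) (Z : Ω → γ) :
    ent p (fun ω => (X ω, Y ω, Z ω)) + ent p Z ≤
      ent p (fun ω => (X ω, Z ω)) + ent p (fun ω => (Y ω, Z ω)) := by
  set mXZ := pmass p (fun ω => (X ω, Z ω))
  set mYZ := pmass p (fun ω => (Y ω, Z ω))
  set mXYZ := pmass p (fun ω => (X ω, Y ω, Z ω))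
  set mZ := pmass p Z
  set r : Ω → ℝ := fun ω => mXZ (X ω, Z ω) * mYZ (Y ω, Z ω) / (mXYZ (X ω, Y ω, Z ω) * mZ (Z ω))
  have hpos : ∀ ω, 0 < p ω → 0 < mXZ (X ω, Z ω) ∧ 0 < mYZ (Y ω, Z ω) ∧
      0 < mXYZ (X ω, Y ω, Z ω) ∧ 0 < mZ (Z ω) := fun ω h0 =>
    ⟨h0.trans_le (le_pmass_apply hp _ ω), h0.trans_le (le_pmass_apply hp _ ω),
      h0.trans_le (le_pmass_apply hp _ ω), h0.trans_le (le_pmass_apply hp _ ω)⟩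
  have hlog : ∑ ω, p ω * Real.log (r ω) ≤ 0 :=
    sum_mul_log_nonpos hp (fun ω h0 => by obtain ⟨h1, h2, h3, h4⟩ := hpos ω h0; positivity)
      (sum_mul_pmass_ratio_le hp X Y Z)
  have hpt : ∀ ω, p ω * Real.logb 2 (mXZ (X ω, Z ω)) + p ω * Real.logb 2 (mYZ (Y ω, Z ω)) -
      p ω * Real.logb 2 (mXYZ (X ω, Y ω, Z ω)) - p ω * Real.logb 2 (mZ (Z ω)) =
      p ω * Real.log (r ω) / Real.log 2 := fun ω => by
    rcases (hp ω).eq_or_lt with h0 | h0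
    · simp [← h0]
    obtain ⟨h1, h2, h3, h4⟩ := hpos ω h0
    rw [Real.log_div (mul_pos h1 h2).ne' (mul_pos h3 h4).ne', Real.log_mul h1.ne' h2.ne',
      Real.log_mul h3.ne' h4.ne']
    simp only [Real.logb]
    ring
  have hsum := sum_congr rfl fun ω (_ : ω ∈ univ) => hpt ω
  rw [← sum_div, sum_sub_distrib, sum_sub_distrib, sum_add_distrib] at hsum
  have := div_nonpos_of_nonpos_of_nonneg hlog (Real.log_nonneg one_le_two)
  rw [ent_eq_neg_sum, ent_eq_neg_sum, ent_eq_neg_sum, ent_eq_neg_sum]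
  linarith

lemma condEnt_nonneg (hp : ∀ ω, 0 ≤ p ω) (X : Ω → α) (Y : Ω → β) : 0 ≤ condEnt p X Y :=
  sub_nonneg.mpr (ent_comp_le hp (fun ω => (X ω, Y ω)) Prod.snd)

lemma condEnt_le_condEnt_comp (hp : ∀ ω, 0 ≤ p ω) (X : Ω → α) (Y : Ω → β) (f : β → γ) :
    condEnt p X Y ≤ condEnt p X (fun ω => f (Y ω)) := by
  have hXY : ent p (fun ω => (X ω, Y ω, f (Y ω))) = ent p (fun ω => (X ω, Y ω)) :=
    ent_eq_of_comp_of_comp hp (fun t => (t.1, t.2, f t.2)) (fun t => (t.1, t.2.1))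
      (fun _ => rfl) (fun _ => rfl)
  have hY : ent p (fun ω => (Y ω, f (Y ω))) = ent p Y :=
    ent_eq_of_comp_of_comp hp (fun y => (y, f y)) Prod.fst (fun _ => rfl) (fun _ => rfl)
  have := ent_triple_add_ent_le hp X Y (fun ω => f (Y ω))
  unfold condEnt
  linarith

lemma condEnt_pair_eq_of_condEnt_eq_zero (hp : ∀ ω, 0 ≤ p ω) {Y : Ω → β} {W : Ω → γ}
    (hW : condEnt p W Y = 0) (X : Ω → α) :
    condEnt p X (fun ω => (Y ω, W ω)) = condEnt p X Y := by
  have hWXY : condEnt p W (fun ω => (X ω, Y ω)) = 0 :=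
    le_antisymm (hW ▸ condEnt_le_condEnt_comp hp W _ Prod.snd) (condEnt_nonneg hp _ _)
  have hYW : ent p (fun ω => (Y ω, W ω)) = ent p (fun ω => (W ω, Y ω)) :=
    ent_eq_of_comp_of_comp hp Prod.swap Prod.swap (fun _ => rfl) (fun _ => rfl)
  have hXYW : ent p (fun ω => (X ω, Y ω, W ω)) = ent p (fun ω => (W ω, X ω, Y ω)) :=
    ent_eq_of_comp_of_comp hp (fun t => (t.2.1, t.2.2, t.1)) (fun t => (t.2.2, t.1, t.2.1))
      (fun _ => rfl) (fun _ => rfl)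
  unfold condEnt at *
  linarith

lemma condEnt_eq_ent_sub_of_condEnt_eq_zero (hp : ∀ ω, 0 ≤ p ω) {Y : Ω → β} {W : Ω → γ}
    (hW : condEnt p W Y = 0) : condEnt p Y W = ent p Y - ent p W := by
  have : ent p (fun ω => (Y ω, W ω)) = ent p (fun ω => (W ω, Y ω)) :=
    ent_eq_of_comp_of_comp hp Prod.swap Prod.swap (fun _ => rfl) (fun _ => rfl)
  unfold condEnt at *
  linarith

lemma condEnt_pair_left_eq_add (hp : ∀ ω, 0 ≤ p ω) (X : Ω → α) (Y : Ω → β) (W : Ω → γ) :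
    condEnt p (fun ω => (X ω, Y ω)) W = condEnt p X W + condEnt p Y (fun ω => (X ω, W ω)) := by
  have : ent p (fun ω => ((X ω, Y ω), W ω)) = ent p (fun ω => (Y ω, X ω, W ω)) :=
    ent_eq_of_comp_of_comp hp (fun t => ((t.2.1, t.1), t.2.2)) (fun t => (t.1.2, t.1.1, t.2))
      (fun _ => rfl) (fun _ => rfl)
  unfold condEnt
  linarith

end Entropy

lemma tripleMI_eq_of_subtuple {Ω α β γ₁ γ₂ : Type} [Fintype Ω] [Fintype α] [Fintype β]
    [Fintype γ₁] [Fintype γ₂] [DecidableEq α] [DecidableEq β] [DecidableEq γ₁] [DecidableEq γ₂]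
    {p : Ω → ℝ} (hp : ∀ ω, 0 ≤ p ω) (X1 : Ω → α) (X2 : Ω → β) (g1 : α → γ₁) (g2 : β → γ₂) :
    tripleMI p X1 X2 (fun ω => (g1 (X1 ω), g2 (X2 ω))) =
      ent p (fun ω => (g1 (X1 ω), g2 (X2 ω))) - condEnt p (fun ω => g2 (X2 ω)) X1
        - condEnt p (fun ω => g1 (X1 ω)) X2 := by
  have h1 : ent p (fun ω => (X1 ω, (g1 (X1 ω), g2 (X2 ω)))) =
      ent p (fun ω => (g2 (X2 ω), X1 ω)) :=
    ent_eq_of_comp_of_comp hp (fun t => (t.2, (g1 t.2, t.1))) (fun t => (t.2.2, t.1))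
      (fun _ => rfl) (fun _ => rfl)
  have h2 : ent p (fun ω => (X2 ω, (g1 (X1 ω), g2 (X2 ω)))) =
      ent p (fun ω => (g1 (X1 ω), X2 ω)) :=
    ent_eq_of_comp_of_comp hp (fun t => (t.2, (t.1, g2 t.2))) (fun t => (t.2.1, t.1))
      (fun _ => rfl) (fun _ => rfl)
  have h12 : ent p (fun ω => (X1 ω, X2 ω, (g1 (X1 ω), g2 (X2 ω)))) =
      ent p (fun ω => (X1 ω, X2 ω)) :=
    ent_eq_of_comp_of_comp hp (fun t => (t.1, t.2, (g1 t.1, g2 t.2))) (fun t => (t.1, t.2.1))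
      (fun _ => rfl) (fun _ => rfl)
  unfold tripleMI condEnt
  linarith

theorem stmt_4_general {Ω α β γ₁ γ₂ δ : Type}
    [Fintype Ω] [Fintype α] [Fintype β] [Fintype γ₁] [Fintype γ₂] [Fintype δ]
    [DecidableEq α] [DecidableEq β] [DecidableEq γ₁] [DecidableEq γ₂] [DecidableEq δ]
    (p : Ω → ℝ) (hp0 : ∀ ω, 0 ≤ p ω)
    (X1 : Ω → α) (X2 : Ω → β) (X3 : Ω → γ₁ × γ₂) (W : Ω → δ)
    (g1 : α → γ₁) (g2 : β → γ₂)
    (hX3 : ∀ ω, X3 ω = (g1 (X1 ω), g2 (X2 ω)))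
    (hW1 : condEnt p W X1 = 0) (hW2 : condEnt p W X2 = 0) (hW3 : condEnt p W X3 = 0) :
    ent p W ≤ tripleMI p X1 X2 X3 := by
  obtain rfl : X3 = fun ω => (g1 (X1 ω), g2 (X2 ω)) := funext hX3
  have hA : condEnt p (fun ω => g1 (X1 ω)) X2 ≤ condEnt p (fun ω => g1 (X1 ω)) W := by
    rw [← condEnt_pair_eq_of_condEnt_eq_zero hp0 hW2]
    exact condEnt_le_condEnt_comp hp0 _ (fun ω => (X2 ω, W ω)) Prod.snd
  have hB : condEnt p (fun ω => g2 (X2 ω)) X1 ≤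
      condEnt p (fun ω => g2 (X2 ω)) (fun ω => (g1 (X1 ω), W ω)) := by
    rw [← condEnt_pair_eq_of_condEnt_eq_zero hp0 hW1]
    exact condEnt_le_condEnt_comp hp0 _ (fun ω => (X1 ω, W ω)) fun t => (g1 t.1, t.2)
  rw [tripleMI_eq_of_subtuple hp0]
  linarith [condEnt_pair_left_eq_add hp0 (fun ω => g1 (X1 ω)) (fun ω => g2 (X2 ω)) W,
    condEnt_eq_ent_sub_of_condEnt_eq_zero hp0 hW3]

/-- if `X3 = (g1(X1), g2(X2))` and `H(W|Xi) = 0` for `i = 1,2,3`,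
then `I(X1;X2;X3) ≥ H(W)`. -/
theorem stmt_4 {Ω α β γ₁ γ₂ δ : Type}
    [Fintype Ω] [Fintype α] [Fintype β] [Fintype γ₁] [Fintype γ₂] [Fintype δ]
    [DecidableEq α] [DecidableEq β] [DecidableEq γ₁] [DecidableEq γ₂] [DecidableEq δ]
    (p : Ω → ℝ) (hp0 : ∀ ω, 0 ≤ p ω) (hp1 : ∑ ω, p ω = 1)
    (X1 : Ω → α) (X2 : Ω → β) (X3 : Ω → γ₁ × γ₂) (W : Ω → δ)
    (g1 : α → γ₁) (g2 : β → γ₂)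
    (hX3 : ∀ ω, X3 ω = (g1 (X1 ω), g2 (X2 ω)))
    (hW1 : condEnt p W X1 = 0) (hW2 : condEnt p W X2 = 0) (hW3 : condEnt p W X3 = 0) :
    ent p W ≤ tripleMI p X1 X2 X3 :=
  stmt_4_general p hp0 X1 X2 X3 W g1 g2 hX3 hW1 hW2 hW3
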